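/- arXiv:1912.13185 — 2 statements merged into one kernel-verified Lean document; each statement's English description precedes it below -/
import Mathlib

section
/- Let ν be a Borel probability distribution on ℝ and let the combined family of real random variables (ε_i)_{i∈ℤ}, (ε'_i)_{i∈ℤ}, (ε''_i)_{i∈ℤ} on a common probability space be jointly independent, each variable having distribution ν. Let H : (ℕ → ℝ) → ℝ be measurable with respect to the product σ-algebra, let p ≥ 1 and m ≥ 1, and define Y_m = H(j ↦ ε_{m−j}); Y'_m = H(j ↦ (ε'_0 if j = m, else ε_{m−j})) (the innovation at time 0 replaced by an independent copy); and Y_m^{(m)} = H(j ↦ (ε_{m−j} if j ≤ m−1, else ε'_{m−j})) (all innovations at times ≤ 0 replaced by independent copies). If Y_m and Y_m^{(m)} belong to L^p, then ‖Y_m − Y'_m‖_p ≤ 2 ‖Y_m − Y_m^{(m)}‖_p. -/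
/-!
Let `V` be built like `Y_m^{(m)}` but with the innovations `ε''` in place of `ε'`. Then
`Y - Y' = (Y - V) + (V - Y')`, and each summand is the same functional of a relabelling of the
i.i.d. array `(ε, ε', ε'')` as `Y - Y_m^{(m)}` is of the array itself: for `Y - V` swap `ε'` and
`ε''`; for `V - Y'` use `ε` at times `≥ 1` and `ε''` at times `≤ 0` as the innovations, and `ε'_0`
at time `0` and `ε` at negative times as their copies. The law of an injective relabelling of an
i.i.d. array does not depend on the relabelling, so both summands have the `L^p` norm of
`Y - Y_m^{(m)}`, and Minkowski's inequality gives the factor `2`.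
-/

open MeasureTheory ProbabilityTheory

section IIDRelabel

variable {Ω ι κ : Type*} [MeasurableSpace Ω] {μ : Measure Ω} {ν : Measure ℝ} {ε : ι → Ω → ℝ}

theorem ProbabilityTheory.iIndepFun.map_precomp_eq_infinitePi (hindep : iIndepFun ε μ)
    (hmeas : ∀ i, Measurable (ε i)) (hdist : ∀ i, μ.map (ε i) = ν) {σ : κ → ι}
    (hσ : σ.Injective) :
    μ.map (fun ω k => ε (σ k) ω) = Measure.infinitePi fun _ => ν := by
  rw [(hindep.precomp hσ).map_fun_eq_infinitePi_map fun k => hmeas (σ k)]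
  simp_rw [hdist]

theorem ProbabilityTheory.iIndepFun.eLpNorm_comp_precomp_eq (hindep : iIndepFun ε μ)
    (hmeas : ∀ i, Measurable (ε i)) (hdist : ∀ i, μ.map (ε i) = ν) {σ τ : κ → ι}
    (hσ : σ.Injective) (hτ : τ.Injective) {F : (κ → ℝ) → ℝ} (hF : Measurable F)
    (p : ENNReal) :
    eLpNorm (fun ω => F fun k => ε (σ k) ω) p μ =
      eLpNorm (fun ω => F fun k => ε (τ k) ω) p μ := by
  have law {σ : κ → ι} (hσ : σ.Injective) : eLpNorm (fun ω => F fun k => ε (σ k) ω) p μ =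
      eLpNorm F p (Measure.infinitePi fun _ => ν) := by
    rw [← hindep.map_precomp_eq_infinitePi hmeas hdist hσ, eLpNorm_map_measure
      hF.aestronglyMeasurable (measurable_pi_lambda _ fun k => hmeas (σ k)).aemeasurable]
    rfl
  rw [law hσ, law hτ]

end IIDRelabel

/-- With `u (0, j) = ε_{m-j}` and `u (1, j) = ε'_{m-j}` this is `Y_m - Y_m^{(m)}`. -/
def tailCouplingDiff (H : (ℕ → ℝ) → ℝ) (m : ℕ) (u : Fin 2 × ℕ → ℝ) : ℝ :=
  H (fun j => u (0, j)) - H (fun j => u (if j < m then 0 else 1, j))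

theorem measurable_tailCouplingDiff {H : (ℕ → ℝ) → ℝ} (hH : Measurable H) (m : ℕ) :
    Measurable (tailCouplingDiff H m) := by
  unfold tailCouplingDiff
  fun_prop

def laggedIndex (m : ℕ) (c : ℤ → Fin 2 → Fin 3) (x : Fin 2 × ℕ) : Fin 3 × ℤ :=
  (c (m - x.2) x.1, m - x.2)

theorem laggedIndex_injective {m : ℕ} {c : ℤ → Fin 2 → Fin 3} (hc : ∀ t, (c t).Injective) :
    (laggedIndex m c).Injective := by
  rintro ⟨k, j⟩ ⟨k', j'⟩ h
  simp only [laggedIndex, Prod.mk.injEq] at h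
  obtain ⟨hk, hj⟩ := h
  obtain rfl : j = j' := by omega
  rw [hc _ hk]

section LaggedIndex

variable {H : (ℕ → ℝ) → ℝ} {m : ℕ}

theorem tailCouplingDiff_laggedIndex_const (hm : 1 ≤ m) (x : Fin 3 × ℤ → ℝ) (b : Fin 3) :
    tailCouplingDiff H m (fun k => x (laggedIndex m (fun _ => ![0, b]) k)) =
      H (fun j => x (0, (m : ℤ) - (j : ℤ))) -
        H (fun j => if j ≤ m - 1 then x (0, (m : ℤ) - (j : ℤ)) else x (b, (m : ℤ) - (j : ℤ))) := by
  simp only [tailCouplingDiff, laggedIndex, Nat.le_sub_one_iff_lt hm]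
  congr 2 with j
  split_ifs <;> rfl

def swapLabel (t : ℤ) : Fin 2 → Fin 3 :=
  if 1 ≤ t then ![0, 1] else if t = 0 then ![2, 1] else ![2, 0]

theorem swapLabel_injective (t : ℤ) : (swapLabel t).Injective := by
  unfold swapLabel
  split_ifs <;> decide

theorem tailCouplingDiff_laggedIndex_swapLabel (hm : 1 ≤ m) (x : Fin 3 × ℤ → ℝ) :
    tailCouplingDiff H m (fun k => x (laggedIndex m swapLabel k)) =
      H (fun j => if j ≤ m - 1 then x (0, (m : ℤ) - (j : ℤ)) else x (2, (m : ℤ) - (j : ℤ))) -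
        H (fun j => if j = m then x (1, 0) else x (0, (m : ℤ) - (j : ℤ))) := by
  simp only [tailCouplingDiff, laggedIndex, swapLabel, Nat.le_sub_one_iff_lt hm]
  congr 2 with j <;> split_ifs <;> first | rfl | omega | (subst_vars; simp)

end LaggedIndex

/-- The index `(0, i)` denotes ε_i, `(1, i)` denotes ε'_i, and `(2, i)` denotes ε''_i. -/
theorem stmt1_general {Ω : Type*} [MeasurableSpace Ω] (μ : Measure Ω)
    (ν : Measure ℝ)
    (ε : Fin 3 × ℤ → Ω → ℝ) (hmeas : ∀ i, Measurable (ε i))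
    (hindep : iIndepFun ε μ)
    (hdist : ∀ i, Measure.map (ε i) μ = ν)
    (H : (ℕ → ℝ) → ℝ) (hH : Measurable H)
    (p : ℝ) (hp : 1 ≤ p) (m : ℕ) (hm : 1 ≤ m)
    (Y Y' Ym : Ω → ℝ)
    (hY : Y = fun ω => H (fun j => ε (0, (m : ℤ) - (j : ℤ)) ω))
    (hY' : Y' = fun ω => H (fun j =>
      if j = m then ε (1, 0) ω else ε (0, (m : ℤ) - (j : ℤ)) ω))
    (hYm : Ym = fun ω => H (fun j =>
      if j ≤ m - 1 then ε (0, (m : ℤ) - (j : ℤ)) ω else ε (1, (m : ℤ) - (j : ℤ)) ω)) :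
    eLpNorm (Y - Y') (ENNReal.ofReal p) μ ≤ 2 * eLpNorm (Y - Ym) (ENNReal.ofReal p) μ := by
  set q := ENNReal.ofReal p
  set V : Ω → ℝ := fun ω => H fun j =>
    if j ≤ m - 1 then ε (0, (m : ℤ) - (j : ℤ)) ω else ε (2, (m : ℤ) - (j : ℤ)) ω
  set D := tailCouplingDiff H m
  have hY_Ym : Y - Ym = fun ω => D fun k => ε (laggedIndex m (fun _ => ![0, 1]) k) ω := by
    subst hY hYm
    exact funext fun ω => (tailCouplingDiff_laggedIndex_const (H := H) hm (fun i => ε i ω) 1).symm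
  have hY_V : Y - V = fun ω => D fun k => ε (laggedIndex m (fun _ => ![0, 2]) k) ω := by
    subst hY
    exact funext fun ω => (tailCouplingDiff_laggedIndex_const (H := H) hm (fun i => ε i ω) 2).symm
  have hV_Y' : V - Y' = fun ω => D fun k => ε (laggedIndex m swapLabel k) ω := by
    subst hY'
    exact funext fun ω => (tailCouplingDiff_laggedIndex_swapLabel (H := H) hm (fun i => ε i ω)).symm
  have hD_meas (c : ℤ → Fin 2 → Fin 3) :
      AEStronglyMeasurable (fun ω => D fun k => ε (laggedIndex m c k) ω) μ :=
    ((measurable_tailCouplingDiff hH m).comp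
      (measurable_pi_lambda _ fun k => hmeas _)).aestronglyMeasurable
  have hD_law {c : ℤ → Fin 2 → Fin 3} (hc : ∀ t, (c t).Injective) :
      eLpNorm (fun ω => D fun k => ε (laggedIndex m c k) ω) q μ = eLpNorm (Y - Ym) q μ := by
    rw [hY_Ym]
    exact hindep.eLpNorm_comp_precomp_eq hmeas hdist (laggedIndex_injective hc)
      (laggedIndex_injective fun _ => by decide) (measurable_tailCouplingDiff hH m) q
  calc eLpNorm (Y - Y') q μ = eLpNorm ((Y - V) + (V - Y')) q μ := by rw [sub_add_sub_cancel]
    _ ≤ eLpNorm (Y - V) q μ + eLpNorm (V - Y') q μ :=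
        eLpNorm_add_le (hY_V ▸ hD_meas _) (hV_Y' ▸ hD_meas _) (ENNReal.one_le_ofReal.mpr hp)
    _ = 2 * eLpNorm (Y - Ym) q μ := by
        rw [hY_V, hV_Y', hD_law fun _ => by decide, hD_law swapLabel_injective, two_mul]

/-- Lemma 3.3(3): for the coupling construction, the physical dependence measure
satisfies δ_p(m) = ‖Y_m − Y'_m‖_p ≤ 2‖Y_m − Y_m^{(m)}‖_p.
The index `(0, i)` denotes ε_i, `(1, i)` denotes ε'_i, and `(2, i)` denotes ε''_i. -/
theorem stmt1 {Ω : Type*} [MeasurableSpace Ω] (μ : Measure Ω) [IsProbabilityMeasure μ]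
    (ν : Measure ℝ) [IsProbabilityMeasure ν]
    (ε : Fin 3 × ℤ → Ω → ℝ) (hmeas : ∀ i, Measurable (ε i))
    (hindep : iIndepFun ε μ)
    (hdist : ∀ i, Measure.map (ε i) μ = ν)
    (H : (ℕ → ℝ) → ℝ) (hH : Measurable H)
    (p : ℝ) (hp : 1 ≤ p) (m : ℕ) (hm : 1 ≤ m)
    (Y Y' Ym : Ω → ℝ)
    (hY : Y = fun ω => H (fun j => ε (0, (m : ℤ) - (j : ℤ)) ω))
    (hY' : Y' = fun ω => H (fun j =>
      if j = m then ε (1, 0) ω else ε (0, (m : ℤ) - (j : ℤ)) ω))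
    (hYm : Ym = fun ω => H (fun j =>
      if j ≤ m - 1 then ε (0, (m : ℤ) - (j : ℤ)) ω else ε (1, (m : ℤ) - (j : ℤ)) ω))
    (hYLp : MemLp Y (ENNReal.ofReal p) μ)
    (hYmLp : MemLp Ym (ENNReal.ofReal p) μ) :
    eLpNorm (Y - Y') (ENNReal.ofReal p) μ ≤ 2 * eLpNorm (Y - Ym) (ENNReal.ofReal p) μ :=
  stmt1_general μ ν ε hmeas hindep hdist H hH p hp m hm Y Y' Ym hY hY' hYm
end

section
/- For ρ ∈ (−1,1) let f_ρ : ℝ² → ℝ denote the bivariate normal density with standard normal marginals and correlation ρ, i.e. f_ρ(x,y) = (2π√(1−ρ²))^{-1} exp(−(x² − 2ρxy + y²)/(2(1−ρ²))), and let f_0(x,y) = (2π)^{-1} exp(−(x²+y²)/2) be the independent product density. Then there exists a constant C > 0 such that for all ρ with |ρ| ≤ 1/2, ∫_{ℝ²} |f_ρ(x,y) − f_0(x,y)| dx dy ≤ C |ρ|. -/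
open MeasureTheory Real

lemma exp_diff_abs (a b : ℝ) :
    |Real.exp a - Real.exp b| ≤ |a - b| * (Real.exp a + Real.exp b) := by
  rcases le_total a b with h | h
  · have h1 : (a - b + 1) * Real.exp b ≤ Real.exp a := by
      have h2 := Real.add_one_le_exp (a - b)
      have h3 := mul_le_mul_of_nonneg_right h2 (Real.exp_pos b).le
      rwa [← Real.exp_add, sub_add_cancel] at h3
    rw [abs_of_nonpos (by linarith [Real.exp_le_exp.2 h]),
      abs_of_nonpos (sub_nonpos.2 h)]
    nlinarith [Real.exp_pos a, Real.exp_pos b]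
  · have h1 : (b - a + 1) * Real.exp a ≤ Real.exp b := by
      have h2 := Real.add_one_le_exp (b - a)
      have h3 := mul_le_mul_of_nonneg_right h2 (Real.exp_pos a).le
      rwa [← Real.exp_add, sub_add_cancel] at h3
    rw [abs_of_nonneg (by linarith [Real.exp_le_exp.2 h]),
      abs_of_nonneg (sub_nonneg.2 h)]
    nlinarith [Real.exp_pos a, Real.exp_pos b]

set_option maxHeartbeats 1600000 in
lemma key_pointwise (ρ x y : ℝ) (hρ : |ρ| ≤ 1 / 2) :
    |(2 * π * Real.sqrt (1 - ρ ^ 2))⁻¹ *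
        Real.exp (-(x ^ 2 - 2 * ρ * x * y + y ^ 2) / (2 * (1 - ρ ^ 2))) -
      (2 * π)⁻¹ * Real.exp (-(x ^ 2 + y ^ 2) / 2)|
    ≤ |ρ| * ((2 * π)⁻¹ * ((4 * (x ^ 2 + y ^ 2) + 1) *
        Real.exp (-(x ^ 2 + y ^ 2) / 3))) := by
  have hm0 : (0:ℝ) ≤ |ρ| := abs_nonneg ρ
  have hm2 : ρ ^ 2 = |ρ| ^ 2 := (sq_abs ρ).symm
  have hu34 : (3:ℝ) / 4 ≤ 1 - ρ ^ 2 := by nlinarith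
  have hu1 : 1 - ρ ^ 2 ≤ 1 := by nlinarith [sq_nonneg ρ]
  have hu0 : (0:ℝ) < 1 - ρ ^ 2 := by linarith
  set v := Real.sqrt (1 - ρ ^ 2) with hv
  have hv0 : 0 < v := Real.sqrt_pos.2 hu0
  have hvsq : v ^ 2 = 1 - ρ ^ 2 := Real.sq_sqrt hu0.le
  have hvhalf : (1:ℝ) / 2 ≤ v := by nlinarith
  have hv1 : v ≤ 1 := by nlinarith
  have hvinv2 : v⁻¹ ≤ 2 := by
    rw [inv_le_comm₀ hv0 (by norm_num)]; linarith
  have hvinv1 : 1 ≤ v⁻¹ := by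
    rw [le_inv_comm₀ one_pos hv0]; simpa using hv1
  have hvinvρ : v⁻¹ - 1 ≤ |ρ| := by
    have h1v : 1 - v ≤ ρ ^ 2 := by nlinarith
    have : v⁻¹ - 1 = (1 - v) * v⁻¹ := by field_simp
    rw [this]
    calc (1 - v) * v⁻¹ ≤ ρ ^ 2 * 2 := by
          apply mul_le_mul h1v hvinv2 (by positivity) (by nlinarith)
      _ ≤ |ρ| := by nlinarith
  set s := x ^ 2 + y ^ 2 with hs
  have hs0 : (0:ℝ) ≤ s := by positivity
  have hxy : 2 * ρ * x * y ≤ |ρ| * s := by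
    nlinarith [mul_nonneg (sub_nonneg.2 (le_abs_self ρ)) (sq_nonneg (x + y)),
      mul_nonneg (sub_nonneg.2 (neg_abs_le ρ)) (sq_nonneg (x - y))]
  have hxy' : -(2 * ρ * x * y) ≤ |ρ| * s := by
    nlinarith [mul_nonneg (sub_nonneg.2 (le_abs_self ρ)) (sq_nonneg (x - y)),
      mul_nonneg (sub_nonneg.2 (neg_abs_le ρ)) (sq_nonneg (x + y))]
  set a := -(x ^ 2 - 2 * ρ * x * y + y ^ 2) / (2 * (1 - ρ ^ 2)) with ha
  set b := -s / 2 with hb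
  have h2u : (0:ℝ) < 2 * (1 - ρ ^ 2) := by linarith
  -- a ≤ -s/3 and b ≤ -s/3
  have ha3 : a ≤ -s / 3 := by
    rw [ha, div_le_div_iff₀ h2u (by norm_num : (0:ℝ) < 3)]
    nlinarith [mul_nonneg (mul_nonneg hs0 (by linarith : (0:ℝ) ≤ 1 - |ρ|))
      (by linarith : (0:ℝ) ≤ 1 - 2 * |ρ|)]
  have hb3 : b ≤ -s / 3 := by rw [hb]; linarith
  have hea : Real.exp a ≤ Real.exp (-s / 3) := Real.exp_le_exp.2 ha3
  have heb : Real.exp b ≤ Real.exp (-s / 3) := Real.exp_le_exp.2 hb3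
  -- |a - b| ≤ |ρ| * s
  have h2xy : |2 * x * y| ≤ s := by
    rw [abs_le]
    constructor
    · nlinarith [sq_nonneg (x + y)]
    · nlinarith [sq_nonneg (x - y)]
  have hnum : |2 * x * y - ρ * s| ≤ (1 + |ρ|) * s := by
    rw [sub_eq_add_neg]
    refine (abs_add_le _ _).trans ?_
    rw [abs_neg, abs_mul ρ s, abs_of_nonneg hs0]
    nlinarith [h2xy]
  have habval : a - b = ρ * (2 * x * y - ρ * s) / (2 * (1 - ρ ^ 2)) := by
    rw [ha, hb, hs]; field_simp; ring
  have hab : |a - b| ≤ |ρ| * s := by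
    rw [habval, abs_div, abs_mul, abs_of_pos h2u, div_le_iff₀ h2u]
    have h1 : |ρ| * |2 * x * y - ρ * s| ≤ |ρ| * ((1 + |ρ|) * s) :=
      mul_le_mul_of_nonneg_left hnum hm0
    have h2 : (1 + |ρ|) ≤ 2 * (1 - ρ ^ 2) := by nlinarith
    have h3 := mul_le_mul_of_nonneg_left h2 (mul_nonneg hm0 hs0)
    nlinarith [h1, h3]
  have hediff : |Real.exp a - Real.exp b| ≤ |ρ| * s * (2 * Real.exp (-s / 3)) := by
    calc |Real.exp a - Real.exp b| ≤ |a - b| * (Real.exp a + Real.exp b) :=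
          exp_diff_abs a b
      _ ≤ (|ρ| * s) * (2 * Real.exp (-s / 3)) := by
          apply mul_le_mul hab (by linarith) (by positivity) (by positivity)
  -- main splitting
  have hfact : (2 * π * v)⁻¹ = (2 * π)⁻¹ * v⁻¹ := by
    rw [mul_inv]
  have hπ : (0:ℝ) < 2 * π := by positivity
  have hT : |v⁻¹ * Real.exp a - Real.exp b|
      ≤ |ρ| * ((4 * s + 1) * Real.exp (-s / 3)) := by
    have hsplit : v⁻¹ * Real.exp a - Real.exp b
        = v⁻¹ * (Real.exp a - Real.exp b) + (v⁻¹ - 1) * Real.exp b := by ring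
    calc |v⁻¹ * Real.exp a - Real.exp b|
        ≤ |v⁻¹ * (Real.exp a - Real.exp b)| + |(v⁻¹ - 1) * Real.exp b| := by
          rw [hsplit]; exact abs_add_le _ _
      _ = v⁻¹ * |Real.exp a - Real.exp b| + (v⁻¹ - 1) * Real.exp b := by
          rw [abs_mul, abs_mul, abs_of_nonneg (by positivity : (0:ℝ) ≤ v⁻¹),
            abs_of_nonneg (by linarith : (0:ℝ) ≤ v⁻¹ - 1),
            abs_of_nonneg (Real.exp_pos b).le]
      _ ≤ 2 * (|ρ| * s * (2 * Real.exp (-s / 3))) + |ρ| * Real.exp (-s / 3) := by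
          exact add_le_add (mul_le_mul hvinv2 hediff (abs_nonneg _) (by norm_num))
            (mul_le_mul hvinvρ heb (Real.exp_pos b).le hm0)
      _ = |ρ| * ((4 * s + 1) * Real.exp (-s / 3)) := by ring
  calc |(2 * π * v)⁻¹ * Real.exp a - (2 * π)⁻¹ * Real.exp b|
      = (2 * π)⁻¹ * |v⁻¹ * Real.exp a - Real.exp b| := by
        rw [hfact, mul_assoc, ← mul_sub, abs_mul,
          abs_of_nonneg (by positivity : (0:ℝ) ≤ (2 * π)⁻¹)]
    _ ≤ (2 * π)⁻¹ * (|ρ| * ((4 * s + 1) * Real.exp (-s / 3))) := by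
        gcongr
    _ = |ρ| * ((2 * π)⁻¹ * ((4 * s + 1) * Real.exp (-s / 3))) := by ring

lemma g0_integrable :
    Integrable (fun z : ℝ × ℝ => (2 * π)⁻¹ * ((4 * (z.1 ^ 2 + z.2 ^ 2) + 1) *
      Real.exp (-(z.1 ^ 2 + z.2 ^ 2) / 3))) := by
  have h1d : Integrable (fun x : ℝ => Real.exp (-(6⁻¹ : ℝ) * x ^ 2)) :=
    integrable_exp_neg_mul_sq (by norm_num)
  have hprod : Integrable (fun z : ℝ × ℝ =>
      Real.exp (-(6⁻¹ : ℝ) * z.1 ^ 2) * Real.exp (-(6⁻¹ : ℝ) * z.2 ^ 2)) := by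
    rw [MeasureTheory.Measure.volume_eq_prod]
    exact h1d.mul_prod h1d
  refine (hprod.const_mul 24).mono' ?_ ?_
  · apply Continuous.aestronglyMeasurable
    continuity
  · filter_upwards with z
    set s := z.1 ^ 2 + z.2 ^ 2 with hs
    have hs0 : (0:ℝ) ≤ s := by positivity
    have hπ : (1:ℝ) ≤ 2 * π := by nlinarith [Real.pi_gt_three]
    have hexp : 4 * s + 1 ≤ 24 * Real.exp (s / 6) := by
      have := Real.add_one_le_exp (s / 6)
      nlinarith [Real.exp_pos (s / 6)]
    have hnorm : ‖(2 * π)⁻¹ * ((4 * s + 1) * Real.exp (-s / 3))‖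
        = (2 * π)⁻¹ * ((4 * s + 1) * Real.exp (-s / 3)) := by
      rw [Real.norm_eq_abs, abs_of_nonneg]; positivity
    rw [hnorm]
    have hsplit : Real.exp (-(6⁻¹ : ℝ) * z.1 ^ 2) * Real.exp (-(6⁻¹ : ℝ) * z.2 ^ 2)
        = Real.exp (-s / 6) := by
      rw [← Real.exp_add]; congr 1; rw [hs]; ring
    rw [hsplit]
    have hkey : (4 * s + 1) * Real.exp (-s / 3) ≤ 24 * Real.exp (-s / 6) := by
      have h1 : Real.exp (-s / 3) = Real.exp (-s / 6) * Real.exp (-s / 6) := by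
        rw [← Real.exp_add]; congr 1; ring
      have h2 : Real.exp (s / 6) * Real.exp (-s / 6) = 1 := by
        rw [← Real.exp_add, show s / 6 + -s / 6 = (0:ℝ) by ring, Real.exp_zero]
      calc (4 * s + 1) * Real.exp (-s / 3)
          ≤ (24 * Real.exp (s / 6)) * Real.exp (-s / 3) := by
            apply mul_le_mul_of_nonneg_right hexp (Real.exp_pos _).le
        _ = 24 * Real.exp (-s / 6) := by rw [h1]; nlinarith [h2]
    calc (2 * π)⁻¹ * ((4 * s + 1) * Real.exp (-s / 3))
        ≤ 1 * ((4 * s + 1) * Real.exp (-s / 3)) := by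
          apply mul_le_mul_of_nonneg_right _ (by positivity)
          rw [inv_le_one_iff₀]; right; exact hπ
      _ ≤ 24 * Real.exp (-s / 6) := by rw [one_mul]; exact hkey

/-- L¹ bound from the proof of Lemma 4.2: the bivariate standard normal density with
correlation ρ deviates from the independent product density by O(|ρ|) in L¹,
uniformly over |ρ| ≤ 1/2. -/
theorem stmt9 :
    ∃ C : ℝ, 0 < C ∧ ∀ ρ : ℝ, |ρ| ≤ 1 / 2 →
      (∫ z : ℝ × ℝ,
          |(2 * π * Real.sqrt (1 - ρ ^ 2))⁻¹ *
              Real.exp (-(z.1 ^ 2 - 2 * ρ * z.1 * z.2 + z.2 ^ 2) / (2 * (1 - ρ ^ 2))) -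
            (2 * π)⁻¹ * Real.exp (-(z.1 ^ 2 + z.2 ^ 2) / 2)|)
        ≤ C * |ρ| := by
  set g0 : ℝ × ℝ → ℝ := fun z => (2 * π)⁻¹ * ((4 * (z.1 ^ 2 + z.2 ^ 2) + 1) *
    Real.exp (-(z.1 ^ 2 + z.2 ^ 2) / 3)) with hg0
  have hg0i : Integrable g0 := g0_integrable
  have hg0nn : ∀ z, 0 ≤ g0 z := fun z => by rw [hg0]; positivity
  have hI : (0:ℝ) ≤ ∫ z, g0 z := integral_nonneg hg0nn
  refine ⟨(∫ z, g0 z) + 1, by positivity, fun ρ hρ => ?_⟩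
  have hmono : (∫ z : ℝ × ℝ,
      |(2 * π * Real.sqrt (1 - ρ ^ 2))⁻¹ *
          Real.exp (-(z.1 ^ 2 - 2 * ρ * z.1 * z.2 + z.2 ^ 2) / (2 * (1 - ρ ^ 2))) -
        (2 * π)⁻¹ * Real.exp (-(z.1 ^ 2 + z.2 ^ 2) / 2)|)
      ≤ ∫ z : ℝ × ℝ, |ρ| * g0 z := by
    apply integral_mono_of_nonneg
    · filter_upwards with z; exact abs_nonneg _
    · exact hg0i.const_mul _
    · filter_upwards with z
      exact key_pointwise ρ z.1 z.2 hρ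
  rw [integral_const_mul] at hmono
  calc (∫ z : ℝ × ℝ,
      |(2 * π * Real.sqrt (1 - ρ ^ 2))⁻¹ *
          Real.exp (-(z.1 ^ 2 - 2 * ρ * z.1 * z.2 + z.2 ^ 2) / (2 * (1 - ρ ^ 2))) -
        (2 * π)⁻¹ * Real.exp (-(z.1 ^ 2 + z.2 ^ 2) / 2)|)
      ≤ |ρ| * ∫ z, g0 z := hmono
    _ ≤ ((∫ z, g0 z) + 1) * |ρ| := by
        rw [mul_comm]
        apply mul_le_mul_of_nonneg_right (by linarith) (abs_nonneg ρ)
end
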